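/- arXiv:2207.05119 — 2 statements merged into one kernel-verified Lean document; each statement's English description precedes it below -/
import Mathlib

section
/- If w is a boolean permutation whose smallest support element a satisfies that a+1 is not in the support of w, and w' is defined by w = s_a w', then the second row of P(w) equals the second row of P(w') together with the element a+1. -/
/-- The simple transposition `s_i` in `S_n`, swapping positions `i` and `i+1`
(1-indexed, so valid for `1 ≤ i ≤ n-1`); otherwise the identity. -/
def simpleT (n : ℕ) (i : ℕ) : Equiv.Perm (Fin n) :=
  if h : 1 ≤ i ∧ i < n then Equiv.swap ⟨i - 1, by omega⟩ ⟨i, h.2⟩ else 1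

/-- `l` is a word in the simple transpositions `s_1, …, s_{n-1}` with product `w`. -/
def IsWord (n : ℕ) (w : Equiv.Perm (Fin n)) (l : List ℕ) : Prop :=
  (∀ i ∈ l, 1 ≤ i ∧ i < n) ∧ (l.map (simpleT n)).prod = w

/-- The Coxeter length of `w`. -/
noncomputable def coxLength (n : ℕ) (w : Equiv.Perm (Fin n)) : ℕ :=
  sInf {k | ∃ l, IsWord n w l ∧ l.length = k}

/-- A reduced word for `w`: a word of minimal length. -/
def IsReducedWord (n : ℕ) (w : Equiv.Perm (Fin n)) (l : List ℕ) : Prop :=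
  IsWord n w l ∧ l.length = coxLength n w

/-- A run: a nonempty word of consecutive integers, increasing or decreasing. -/
def IsRun (r : List ℕ) : Prop :=
  r ≠ [] ∧ (List.Chain' (fun a b => b = a + 1) r ∨ List.Chain' (fun a b => a = b + 1) r)

/-- `run(w)`: the minimum number of runs whose concatenation is a reduced word of `w`. -/
noncomputable def runStat (n : ℕ) (w : Equiv.Perm (Fin n)) : ℕ :=
  sInf {k | ∃ rs : List (List ℕ), rs.length = k ∧ (∀ r ∈ rs, IsRun r) ∧
    IsReducedWord n w rs.flatten}

/-- One-line notation of `w`, with entries `1, …, n`. -/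
def oneLine {n : ℕ} (w : Equiv.Perm (Fin n)) : List ℕ :=
  List.ofFn (fun i => (w i : ℕ) + 1)

/-- Length of a longest increasing subsequence of the one-line notation of `w`. -/
noncomputable def lisLen {n : ℕ} (w : Equiv.Perm (Fin n)) : ℕ :=
  sSup {k | ∃ l : List ℕ, l.Sublist (oneLine w) ∧ l.Pairwise (· < ·) ∧ l.length = k}

/-- Schensted row insertion: insert `x` into row `r`, possibly bumping an entry. -/
def rowInsert (r : List ℕ) (x : ℕ) : List ℕ × Option ℕ :=
  match r.findIdx? (fun y => decide (x < y)) with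
  | none => (r ++ [x], none)
  | some i => (r.set i x, r[i]?)

/-- Schensted insertion of `x` into a tableau (list of rows). -/
def bumpInsert : List (List ℕ) → ℕ → List (List ℕ)
  | [], x => [[x]]
  | r :: rest, x =>
    match rowInsert r x with
    | (r', none) => r' :: rest
    | (r', some y) => r' :: bumpInsert rest y

/-- The RSK insertion tableau of a word. -/
def Ptab (w : List ℕ) : List (List ℕ) := w.foldl bumpInsert []

/-- The index of the row where the new box appeared, going from `p` to `p'`. -/
def recRow (p p' : List (List ℕ)) : ℕ :=
  (List.range p'.length).findIdx
    (fun j => decide ((p.getD j []).length < (p'.getD j []).length))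

/-- Add entry `v` at the end of row `j` of `q`. -/
def addAt (q : List (List ℕ)) (j v : ℕ) : List (List ℕ) :=
  if j < q.length then q.set j ((q.getD j []) ++ [v]) else q ++ [[v]]

/-- The RSK recording tableau of a word. -/
def Qtab (w : List ℕ) : List (List ℕ) :=
  ((w.zipIdx.map Prod.swap).foldl (fun pq ix =>
    let p' := bumpInsert pq.1 ix.2
    (p', addAt pq.2 (recRow pq.1 p') (ix.1 + 1))) (([], []) : List (List ℕ) × List (List ℕ))).2

/-- The second row of a tableau. -/
def Row2 (t : List (List ℕ)) : List ℕ := t.getD 1 []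

/-- A set `L` of integers is uncrowded if every interval `[y, y+2x]` contains
at most `x+1` elements of `L`. -/
def Uncrowded (L : Set ℤ) : Prop :=
  ∀ (y : ℤ) (x : ℕ), 0 < x → ({z : ℤ | y ≤ z ∧ z ≤ y + 2 * (x : ℤ)} ∩ L).ncard ≤ x + 1

/-- `w` is boolean: some reduced word of `w` has all distinct letters. -/
def BooleanPerm (n : ℕ) (w : Equiv.Perm (Fin n)) : Prop :=
  ∃ l, IsReducedWord n w l ∧ l.Nodup

/-- `w` avoids the pattern `321`. -/
def Avoids321 {n : ℕ} (w : Equiv.Perm (Fin n)) : Prop :=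
  ¬ ∃ i j k : Fin n, i < j ∧ j < k ∧ w k < w j ∧ w j < w i

/-- `w` avoids the pattern `3412`. -/
def Avoids3412 {n : ℕ} (w : Equiv.Perm (Fin n)) : Prop :=
  ¬ ∃ i j k l : Fin n, i < j ∧ j < k ∧ k < l ∧ w k < w l ∧ w l < w i ∧ w i < w j

/-- The support of `w`: the letters appearing in reduced words of `w`. -/
def Supp (n : ℕ) (w : Equiv.Perm (Fin n)) : Set ℕ :=
  {i | ∃ l, IsReducedWord n w l ∧ i ∈ l}

/-- The entries of a row, as a set of integers. -/
def entrySet (r : List ℕ) : Set ℤ := {z | ∃ x ∈ r, (x : ℤ) = z}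

/-- `(r1, r2)` are the rows of a standard Young tableau of size `n` with at most
two rows (entries `1, …, n`). -/
def IsSYT2 (n : ℕ) (r1 r2 : List ℕ) : Prop :=
  r1.Pairwise (· < ·) ∧ r2.Pairwise (· < ·) ∧ r2.length ≤ r1.length ∧
  (∀ i < r2.length, r1.getD i 0 < r2.getD i 0) ∧
  (r1 ++ r2).Perm (List.range' 1 n)

/-- The tableau (list of nonempty rows) with rows `r1`, `r2`. -/
def tab2 (r1 r2 : List ℕ) : List (List ℕ) :=
  if r2 = [] then (if r1 = [] then [] else [r1]) else [r1, r2]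

/-- Every maximal block of `1`s (`true`s) in the binary word has odd length. -/
def OddBlocks (l : List Bool) : Prop :=
  ∀ l₁ l₂ l₃ : List Bool, l = l₁ ++ l₂ ++ l₃ → l₂ ≠ [] → (∀ b ∈ l₂, b = true) →
    l₁.getLast? ≠ some true → l₃.head? ≠ some true → Odd l₂.length

/-! The letters of a reduced word of `w` are `a` or at least `a + 2`. The latter commute with
`s_a` and fix `1, …, a + 1`, and `s_a` occurs an odd number of times (otherwise deleting all
its occurrences would give a shorter word), so `w'` fixes `1, …, a + 1`. Hence, with
`q = 1 ⋯ (a - 1)`, the one-line notations are `q a (a+1) t` for `w'` and `q (a+1) a t` for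
`w`, where every entry of `t` exceeds `a + 1`. Inserting the prefixes gives the rows `q a (a+1)`
and `q a / (a+1)`; since all later entries exceed `a + 1`, the two insertions then bump the same
entries, and the tableaux keep differing only in where `a + 1` sits: right after `q a` in the
first row, or at the head of the second row. -/

lemma simpleT_apply_of_lt {n i : ℕ} {p : Fin n} (h : (p : ℕ) + 1 < i) : simpleT n i p = p := by
  unfold simpleT
  split_ifs
  · exact Equiv.swap_apply_of_ne_of_ne (Fin.ne_of_val_ne (by simp; omega))
      (Fin.ne_of_val_ne (by simp; omega))
  · rfl

lemma simpleT_mul_self (n i : ℕ) : simpleT n i * simpleT n i = 1 := by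
  unfold simpleT
  split_ifs
  · exact Equiv.swap_mul_self _ _
  · exact one_mul 1

lemma simpleT_pow_of_even {n i k : ℕ} (hk : Even k) : simpleT n i ^ k = 1 := by
  obtain ⟨m, rfl⟩ := hk
  rw [← two_mul, pow_mul, sq, simpleT_mul_self, one_pow]

lemma simpleT_pow_of_odd {n i k : ℕ} (hk : Odd k) : simpleT n i ^ k = simpleT n i := by
  obtain ⟨m, rfl⟩ := hk
  rw [pow_succ, simpleT_pow_of_even (even_two_mul m), one_mul]

lemma simpleT_commute {n i j : ℕ} (h : i + 2 ≤ j) : Commute (simpleT n i) (simpleT n j) := by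
  unfold simpleT
  split_ifs
  · refine Equiv.Perm.Disjoint.commute fun x => ?_
    by_cases hx : (x : ℕ) ≤ i
    · exact .inr (Equiv.swap_apply_of_ne_of_ne (Fin.ne_of_val_ne (by simp; omega))
        (Fin.ne_of_val_ne (by simp; omega)))
    · exact .inl (Equiv.swap_apply_of_ne_of_ne (Fin.ne_of_val_ne (by simp; omega))
        (Fin.ne_of_val_ne (by simp; omega)))
  all_goals simp

lemma prod_simpleT_apply_of_le {n a : ℕ} {l : List ℕ} (hl : ∀ i ∈ l, a + 2 ≤ i) {p : Fin n}
    (hp : (p : ℕ) ≤ a) : (l.map (simpleT n)).prod p = p := by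
  induction l with
  | nil => rfl
  | cons i l ih =>
    rw [List.forall_mem_cons] at hl
    rw [List.map_cons, List.prod_cons, Equiv.Perm.mul_apply, ih hl.2,
      simpleT_apply_of_lt (by omega)]

lemma prod_simpleT_eq_pow_mul {n a : ℕ} {l : List ℕ} (hl : ∀ i ∈ l, i = a ∨ a + 2 ≤ i) :
    (l.map (simpleT n)).prod =
      simpleT n a ^ l.count a * ((l.filter (· ≠ a)).map (simpleT n)).prod := by
  induction l with
  | nil => simp
  | cons i l ih =>
    rw [List.forall_mem_cons] at hl
    rw [List.map_cons, List.prod_cons, ih hl.2]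
    rcases hl.1 with rfl | hi
    · rw [List.count_cons_self, List.filter_cons_of_neg (by simp), pow_succ', mul_assoc]
    · rw [List.count_cons_of_ne (by omega), List.filter_cons_of_pos (by simp; omega),
        List.map_cons, List.prod_cons, ← mul_assoc, ← mul_assoc,
        ((simpleT_commute hi).symm.pow_right _).eq]

lemma one_le_and_lt_of_mem_Supp {n i : ℕ} {w : Equiv.Perm (Fin n)} (hi : i ∈ Supp n w) :
    1 ≤ i ∧ i < n := by
  obtain ⟨l, hl, hil⟩ := hi
  exact hl.1.1 i hil

lemma apply_eq_self_of_eq_simpleT_mul {n a : ℕ} {w w' : Equiv.Perm (Fin n)}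
    (ha : a ∈ Supp n w) (hmin : ∀ b ∈ Supp n w, a ≤ b) (hna : a + 1 ∉ Supp n w)
    (hw : w = simpleT n a * w') {p : Fin n} (hp : (p : ℕ) ≤ a) : w' p = p := by
  obtain ⟨l, hred, hal⟩ := ha
  have hletters : ∀ i ∈ l, i = a ∨ a + 2 ≤ i := by
    intro i hi
    have h1 := hmin i ⟨l, hred, hi⟩
    have h2 : i ≠ a + 1 := fun h => hna (h ▸ ⟨l, hred, hi⟩)
    omega
  set l' := l.filter (· ≠ a)
  have hwl := prod_simpleT_eq_pow_mul (n := n) hletters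
  rw [hred.1.2] at hwl
  have hodd : Odd (l.count a) := by
    rw [← Nat.not_even_iff_odd]
    intro heven
    have hword : IsWord n w l' :=
      ⟨fun i hi => hred.1.1 i (List.mem_of_mem_filter hi),
        by rw [hwl, simpleT_pow_of_even heven, one_mul]⟩
    have hshorter : l'.length < l.length :=
      List.length_filter_lt_length_iff_exists.mpr ⟨a, hal, by simp⟩
    have hmin_len : coxLength n w ≤ l'.length := Nat.sInf_le ⟨l', hword, rfl⟩
    exact absurd hred.2 (by omega)
  have hw' : w' = (l'.map (simpleT n)).prod := by
    rw [simpleT_pow_of_odd hodd, hw] at hwl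
    exact mul_left_cancel hwl
  refine hw' ▸ prod_simpleT_apply_of_le (fun i hi => ?_) hp
  obtain ⟨hil, hia⟩ := List.mem_filter.mp hi
  exact (hletters i hil).resolve_left (by simpa using hia)

lemma oneLine_simpleT_mul {n a : ℕ} (ha : 1 ≤ a) (han : a < n) (u : Equiv.Perm (Fin n)) :
    oneLine (simpleT n a * u) = (oneLine u).map (Equiv.swap a (a + 1)) := by
  simp only [oneLine, List.map_ofFn]
  congr 1
  funext i
  simp only [simpleT, dif_pos (And.intro ha han), Function.comp_apply, Equiv.Perm.mul_apply,
    Equiv.swap_apply_def, Fin.ext_iff]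
  split_ifs <;> (try dsimp only) <;> omega

lemma oneLine_eq_range'_append {n m : ℕ} {u : Equiv.Perm (Fin n)} (hm : m ≤ n)
    (hu : ∀ p : Fin n, (p : ℕ) < m → u p = p) :
    ∃ t, oneLine u = List.range' 1 m ++ t ∧ ∀ z ∈ t, m < z := by
  have hlen : (oneLine u).length = n := List.length_ofFn
  refine ⟨(oneLine u).drop m, ?_, fun z hz => ?_⟩
  · conv_lhs => rw [← List.take_append_drop m (oneLine u)]
    congr 1
    refine List.ext_getElem (by simp [hlen, hm]) fun i hi _ => ?_
    simp only [List.length_take, hlen] at hi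
    simp [oneLine, hu ⟨i, by omega⟩ (by simp; omega), add_comm]
  · obtain ⟨j, hj, rfl⟩ := List.getElem_of_mem hz
    simp only [List.length_drop, hlen] at hj
    simp only [List.getElem_drop, oneLine, List.getElem_ofFn]
    set p : Fin n := ⟨m + j, by omega⟩
    by_contra! hlt
    have hfix : u (u p) = u p := hu _ (by omega)
    have : (u p : ℕ) = m + j := congrArg Fin.val (u.injective hfix)
    omega

lemma rowInsert_nil (x : ℕ) : rowInsert [] x = ([x], none) := rfl

lemma rowInsert_cons_of_le {b x : ℕ} (r : List ℕ) (h : b ≤ x) :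
    rowInsert (b :: r) x = (b :: (rowInsert r x).1, (rowInsert r x).2) := by
  unfold rowInsert
  rw [List.findIdx?_cons, if_neg (by simpa using h)]
  cases List.findIdx? (fun y => decide (x < y)) r <;> simp

lemma rowInsert_append_of_le {p : List ℕ} {x : ℕ} (r : List ℕ) (h : ∀ z ∈ p, z ≤ x) :
    rowInsert (p ++ r) x = (p ++ (rowInsert r x).1, (rowInsert r x).2) := by
  induction p with
  | nil => rfl
  | cons b p ih =>
    rw [List.forall_mem_cons] at h
    rw [List.cons_append, rowInsert_cons_of_le _ h.1, ih h.2, List.cons_append]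

lemma rowInsert_of_le {r : List ℕ} {x : ℕ} (h : ∀ z ∈ r, z ≤ x) :
    rowInsert r x = (r ++ [x], none) := by
  simpa [rowInsert_nil] using rowInsert_append_of_le [] h

lemma lt_of_rowInsert_snd_eq_some {r : List ℕ} {x y : ℕ} (h : (rowInsert r x).2 = some y) :
    x < y := by
  unfold rowInsert at h
  rcases hf : List.findIdx? (fun y => decide (x < y)) r with _ | i
  · simp [hf] at h
  · obtain ⟨hi, hlt, -⟩ := List.findIdx?_eq_some_iff_getElem.mp hf
    simp only [hf, List.getElem?_eq_getElem hi, Option.some.injEq] at h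
    simpa [← h] using hlt

lemma bumpInsert_cons_of_le {r : List ℕ} {x : ℕ} (rest : List (List ℕ)) (h : ∀ z ∈ r, z ≤ x) :
    bumpInsert (r :: rest) x = (r ++ [x]) :: rest := by
  simp only [bumpInsert, rowInsert_of_le h]

lemma foldl_bumpInsert_of_sorted {l : List ℕ} (hl : l.Pairwise (· < ·)) :
    ∀ {r : List ℕ} (rest : List (List ℕ)), (∀ x ∈ l, ∀ z ∈ r, z < x) →
      l.foldl bumpInsert (r :: rest) = (r ++ l) :: rest := by
  induction l with
  | nil => simp
  | cons x l ih =>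
    intro r rest h
    rw [List.pairwise_cons] at hl
    rw [List.foldl_cons, bumpInsert_cons_of_le rest fun z hz => (h x (by simp) z hz).le,
      ih hl.2 rest, List.append_assoc, List.singleton_append]
    intro y hy z hz
    rcases List.mem_append.mp hz with hz | hz
    · exact h y (List.mem_cons_of_mem _ hy) z hz
    · exact (List.mem_singleton.mp hz) ▸ hl.1 y hy

lemma Ptab_of_sorted {l : List ℕ} (hl : l.Pairwise (· < ·)) (hne : l ≠ []) : Ptab l = [l] := by
  obtain ⟨x, l, rfl⟩ := List.exists_cons_of_ne_nil hne
  rw [List.pairwise_cons] at hl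
  exact foldl_bumpInsert_of_sorted hl.2 [] (by simpa using hl.1)

lemma Ptab_append_pair_of_gt {q : List ℕ} {b c : ℕ} (hq : q.Pairwise (· < ·))
    (hqb : ∀ z ∈ q, z < b) (hbc : b < c) : Ptab (q ++ [c, b]) = [q ++ [b], [c]] := by
  have hsorted : (q ++ [c]).Pairwise (· < ·) :=
    List.pairwise_append.mpr ⟨hq, by simp, by simpa using fun z hz => (hqb z hz).trans hbc⟩
  have hrow : rowInsert (q ++ [c]) b = (q ++ [b], some c) := by
    rw [rowInsert_append_of_le _ fun z hz => (hqb z hz).le]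
    simp [rowInsert, hbc]
  rw [show q ++ [c, b] = (q ++ [c]) ++ [b] by simp, Ptab, List.foldl_append]
  show bumpInsert (Ptab (q ++ [c])) b = _
  rw [Ptab_of_sorted hsorted (by simp)]
  simp only [bumpInsert, hrow]

def consHead (c : ℕ) : List (List ℕ) → List (List ℕ)
  | [] => [[c]]
  | r :: rest => (c :: r) :: rest

lemma bumpInsert_consHead {c y : ℕ} (T : List (List ℕ)) (h : c ≤ y) :
    bumpInsert (consHead c T) y = consHead c (bumpInsert T y) := by
  cases T with
  | nil => simp [consHead, bumpInsert, rowInsert_cons_of_le _ h, rowInsert_nil]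
  | cons r rest =>
    simp only [consHead, bumpInsert, rowInsert_cons_of_le _ h]
    rcases rowInsert r y with ⟨r', _ | z⟩ <;> rfl

def MovesDown (p : List ℕ) (c : ℕ) (T T' : List (List ℕ)) : Prop :=
  ∃ s rest, T' = (p ++ c :: s) :: rest ∧ T = (p ++ s) :: consHead c rest

lemma movesDown_bumpInsert {p : List ℕ} {c x : ℕ} {T T' : List (List ℕ)}
    (h : MovesDown p c T T') (hp : ∀ z ∈ p, z ≤ x) (hc : c ≤ x) :
    MovesDown p c (bumpInsert T x) (bumpInsert T' x) := by
  obtain ⟨s, rest, rfl, rfl⟩ := h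
  have hrow' : rowInsert (p ++ c :: s) x = (p ++ c :: (rowInsert s x).1, (rowInsert s x).2) := by
    rw [rowInsert_append_of_le _ hp, rowInsert_cons_of_le _ hc]
  rcases hs : rowInsert s x with ⟨s', _ | y⟩
  · refine ⟨s', rest, ?_, ?_⟩
    · simp [bumpInsert, hrow', hs]
    · simp [bumpInsert, rowInsert_append_of_le _ hp, hs]
  · have hy : c ≤ y := hc.trans (lt_of_rowInsert_snd_eq_some (by rw [hs])).le
    refine ⟨s', bumpInsert rest y, ?_, ?_⟩
    · simp [bumpInsert, hrow', hs]
    · simp [bumpInsert, rowInsert_append_of_le _ hp, hs, bumpInsert_consHead _ hy]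

lemma movesDown_foldl_bumpInsert {p : List ℕ} {c : ℕ} {t : List ℕ}
    (ht : ∀ x ∈ t, (∀ z ∈ p, z ≤ x) ∧ c ≤ x) :
    ∀ {T T' : List (List ℕ)}, MovesDown p c T T' →
      MovesDown p c (t.foldl bumpInsert T) (t.foldl bumpInsert T') := by
  induction t with
  | nil => exact id
  | cons x t ih =>
    rw [List.forall_mem_cons] at ht
    exact fun h => ih ht.2 (movesDown_bumpInsert h ht.1.1 ht.1.2)

lemma Row2_eq_cons_of_movesDown {p : List ℕ} {c : ℕ} {T T' : List (List ℕ)}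
    (h : MovesDown p c T T') : Row2 T = c :: Row2 T' := by
  obtain ⟨s, rest, rfl, rfl⟩ := h
  cases rest <;> rfl

lemma Row2_Ptab_swap {q t : List ℕ} {b c : ℕ} (hq : q.Pairwise (· < ·))
    (hqb : ∀ z ∈ q, z < b) (hbc : b < c) (ht : ∀ x ∈ t, c ≤ x) :
    Row2 (Ptab (q ++ c :: b :: t)) = c :: Row2 (Ptab (q ++ b :: c :: t)) := by
  have hsorted : (q ++ [b, c]).Pairwise (· < ·) :=
    List.pairwise_append.mpr ⟨hq, by simpa using hbc, by
      simpa using fun z hz => ⟨hqb z hz, (hqb z hz).trans hbc⟩⟩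
  have hstart : MovesDown (q ++ [b]) c (Ptab (q ++ [c, b])) (Ptab (q ++ [b, c])) := by
    rw [Ptab_append_pair_of_gt hq hqb hbc, Ptab_of_sorted hsorted (by simp)]
    exact ⟨[], [], by simp, by simp [consHead]⟩
  have hmoves := Row2_eq_cons_of_movesDown
    (movesDown_foldl_bumpInsert (t := t) (fun x hx => ⟨fun z hz => ?_, ht x hx⟩) hstart)
  · simpa [Ptab, List.foldl_append] using hmoves
  · rcases List.mem_append.mp hz with hz | hz
    · exact ((hqb z hz).trans (hbc.trans_le (ht x hx))).le
    · exact (List.mem_singleton.mp hz) ▸ (hbc.trans_le (ht x hx)).le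

theorem stmt12_general (n : ℕ) (w w' : Equiv.Perm (Fin n)) (a : ℕ)
    (ha : a ∈ Supp n w) (hmin : ∀ b ∈ Supp n w, a ≤ b)
    (hna : a + 1 ∉ Supp n w) (hw : w = simpleT n a * w') :
    {x : ℕ | x ∈ Row2 (Ptab (oneLine w))} =
      {x : ℕ | x ∈ Row2 (Ptab (oneLine w'))} ∪ {a + 1} := by
  obtain ⟨ha1, han⟩ := one_le_and_lt_of_mem_Supp ha
  obtain ⟨t, hw't, ht⟩ := oneLine_eq_range'_append (m := a + 1) han
    fun p hp => apply_eq_self_of_eq_simpleT_mul ha hmin hna hw (Nat.lt_succ_iff.mp hp)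
  set q := List.range' 1 (a - 1)
  have hq : ∀ z ∈ q, z < a := fun z hz => by simp [q] at hz; omega
  have hw'line : oneLine w' = q ++ a :: (a + 1) :: t := by
    have hsplit : List.range' 1 (a + 1) = q ++ List.range' a 2 := by
      rw [show a + 1 = a - 1 + 2 by omega, ← List.range'_append_1, show 1 + (a - 1) = a by omega]
    simp [hw't, hsplit, List.range'_succ]
  have hwline : oneLine w = q ++ (a + 1) :: a :: t := by
    have hfix : ∀ z, z < a ∨ a + 1 < z → Equiv.swap a (a + 1) z = z := fun z hz =>
      Equiv.swap_apply_of_ne_of_ne (by omega) (by omega)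
    rw [hw, oneLine_simpleT_mul ha1 han, hw'line]
    simp only [List.map_append, List.map_cons, Equiv.swap_apply_left, Equiv.swap_apply_right]
    rw [List.map_congr_left (g := id) fun z hz => hfix z (.inl (hq z hz)),
      List.map_congr_left (g := id) fun z hz => hfix z (.inr (ht z hz)), List.map_id, List.map_id]
  have hrow : Row2 (Ptab (q ++ (a + 1) :: a :: t)) =
      (a + 1) :: Row2 (Ptab (q ++ a :: (a + 1) :: t)) :=
    Row2_Ptab_swap List.pairwise_lt_range' hq (Nat.lt_add_one a) fun x hx => (ht x hx).le
  ext x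
  rw [hwline, hw'line, hrow]
  simp

theorem stmt12 (n : ℕ) (w w' : Equiv.Perm (Fin n)) (a : ℕ)
    (hb : BooleanPerm n w) (ha : a ∈ Supp n w) (hmin : ∀ b ∈ Supp n w, a ≤ b)
    (hna : a + 1 ∉ Supp n w) (hw : w = simpleT n a * w') :
    {x : ℕ | x ∈ Row2 (Ptab (oneLine w))} =
      {x : ℕ | x ∈ Row2 (Ptab (oneLine w'))} ∪ {a + 1} :=
  stmt12_general n w w' a ha hmin hna hw
end

section
/- The number of standard Young tableaux of size n with at most two rows whose second-row entry set is uncrowded equals the number of binary words of length n−1 in which every maximal block of 1s has odd length. -/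
/-!
Encode a two-row tableau of size `n` by the binary word whose `i`-th letter says whether `i` lies
in the second row, and call `#1 - #0` the excess of a word. Standard tableaux are then the ballot
words (no prefix has positive excess), and an uncrowded second row means that no factor has excess
above `2`. A ballot word starts with `0`; the remaining word `u`, of length `n - 1`, has prefixes of
excess at most `1` and factors of excess at most `2`.

Read from right to left, these words are recognised by the automaton whose state is the largest
excess of a prefix of the part read so far (`0`, `1` or `2`, plus a failure state). Words whose
blocks of `1`s all have odd length are recognised by an automaton with the same transition table,
except that in state `2` the two letters exchange their roles. Swapping the letters read in state
`2` is therefore a length-preserving bijection between the two languages.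
-/

namespace List

section Relabel

variable {α σ : Type*} (δ : α → σ → σ) (q₀ : σ) (π : σ → Equiv.Perm α)

def relabel : List α → List α
  | [] => []
  | a :: w => π (w.foldr δ q₀) a :: relabel w

@[simp]
theorem length_relabel (w : List α) : (relabel δ q₀ π w).length = w.length := by
  induction w <;> simp_all [relabel]

variable {δ q₀ π} {δ' : α → σ → σ}

theorem foldr_relabel (h : ∀ a q, δ' (π q a) q = δ a q) (w : List α) :
    (relabel δ q₀ π w).foldr δ' q₀ = w.foldr δ q₀ := by
  induction w with
  | nil => rfl
  | cons a w ih => simp [relabel, ih, h]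

theorem relabel_symm_relabel (h : ∀ a q, δ' (π q a) q = δ a q) (w : List α) :
    relabel δ' q₀ (fun q => (π q).symm) (relabel δ q₀ π w) = w := by
  induction w with
  | nil => rfl
  | cons a w ih => simp [relabel, ih, foldr_relabel h]

def relabelEquiv (h : ∀ a q, δ' (π q a) q = δ a q) : List α ≃ List α where
  toFun := relabel δ q₀ π
  invFun := relabel δ' q₀ fun q => (π q).symm
  left_inv := relabel_symm_relabel h
  right_inv := relabel_symm_relabel (δ := δ') (δ' := δ) (π := fun q => (π q).symm)
    fun a q => by simpa using (h ((π q).symm a) q).symm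

theorem card_foldr_eq_of_relabel (h : ∀ a q, δ' (π q a) q = δ a q) (P : σ → Prop) (m : ℕ) :
    Nat.card {w : List α // w.length = m ∧ P (w.foldr δ q₀)} =
      Nat.card {w : List α // w.length = m ∧ P (w.foldr δ' q₀)} :=
  Nat.card_congr <| (relabelEquiv (q₀ := q₀) h).subtypeEquiv fun w => by
    simp [relabelEquiv, foldr_relabel h]

end Relabel

section IdxsOf

variable {α : Type*} [BEq α] [LawfulBEq α]

theorem idxsOf_concat (v : List α) (b c : α) (s : ℕ) :
    (v ++ [c]).idxsOf b s = v.idxsOf b s ++ if c == b then [s + v.length] else [] := by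
  by_cases h : c = b <;> simp [idxsOf, h]

theorem length_filter_idxsOf (v : List α) (b : α) (s i k : ℕ) :
    ((v.idxsOf b s).filter fun j => s + i ≤ j ∧ j < s + i + k).length =
      ((v.drop i).take k).count b := by
  induction v generalizing s i k with
  | nil => simp
  | cons c v ih =>
    have hge : ∀ j ∈ v.idxsOf b (s + 1), s + 1 ≤ j := fun j => ge_of_mem_idxsOf j
    rcases i with _ | i
    · rcases k with _ | k
      · simp only [take_zero, count_nil, length_eq_zero_iff, filter_eq_nil_iff]
        grind
      · have := ih (s + 1) 0 k
        rw [filter_congr (q := fun j => decide (s + 0 ≤ j ∧ j < s + 0 + (k + 1)))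
          (by grind)] at this
        by_cases h : c = b <;> simpa [idxsOf_cons, count_cons, h, Nat.add_right_comm] using this
    · have := ih (s + 1) i k
      by_cases h : c = b <;> simpa [idxsOf_cons, h, Nat.add_right_comm, Nat.add_assoc] using this

end IdxsOf

end List

def PrefixBounded (e : ℕ) (w : List Bool) : Prop :=
  ∀ p, p <+: w → 2 * p.count true ≤ p.length + e

def InfixBounded (w : List Bool) : Prop :=
  ∀ f, f <:+: w → 2 * f.count true ≤ f.length + 2

section Bounded

variable {e : ℕ} {u : List Bool}

theorem PrefixBounded.mono {e' : ℕ} (h : PrefixBounded e u) (he : e ≤ e') :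
    PrefixBounded e' u :=
  fun p hp => (h p hp).trans (by omega)

theorem prefixBounded_cons (c : Bool) :
    PrefixBounded e (c :: u) ↔ ∀ p, p <+: u → 2 * (c :: p).count true ≤ p.length + 1 + e := by
  refine ⟨fun h p hp => by simpa using h (c :: p) (List.cons_prefix_cons.mpr ⟨rfl, hp⟩),
    fun h p hp => ?_⟩
  rcases List.prefix_cons_iff.mp hp with rfl | ⟨t, rfl, ht⟩
  · simp
  · simpa using h t ht

theorem prefixBounded_cons_true :
    PrefixBounded e (true :: u) ↔ 1 ≤ e ∧ PrefixBounded (e - 1) u := by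
  rw [prefixBounded_cons]
  refine ⟨fun h => ⟨?_, fun p hp => ?_⟩, fun ⟨he, h⟩ p hp => ?_⟩
  · have := h [] List.nil_prefix
    simp only [List.count_singleton_self, List.length_nil] at this
    omega
  · have := h p hp
    simp only [List.count_cons_self] at this
    omega
  · have := h p hp
    simp only [List.count_cons_self]
    omega

theorem prefixBounded_cons_false :
    PrefixBounded e (false :: u) ↔ PrefixBounded (e + 1) u := by
  rw [prefixBounded_cons]
  exact forall₂_congr fun p _ => by simp; omega

theorem prefixBounded_concat (c : Bool) :
    PrefixBounded e (u ++ [c]) ↔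
      PrefixBounded e u ∧ 2 * (u ++ [c]).count true ≤ u.length + 1 + e := by
  simp [PrefixBounded, List.prefix_concat_iff, or_imp, forall_and, and_comm]

theorem InfixBounded.prefixBounded (h : InfixBounded u) : PrefixBounded 2 u :=
  fun p hp => h p hp.isInfix

theorem infixBounded_cons (c : Bool) :
    InfixBounded (c :: u) ↔ PrefixBounded 2 (c :: u) ∧ InfixBounded u := by
  simp [InfixBounded, PrefixBounded, List.infix_cons_iff, or_imp, forall_and]

end Bounded

def ColumnStrict (r₁ r₂ : List ℕ) : Prop :=
  r₂.length ≤ r₁.length ∧ ∀ i < r₂.length, r₁.getD i 0 < r₂.getD i 0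

section ColumnStrict

variable {r₁ r₂ : List ℕ} {x : ℕ}

theorem columnStrict_concat_left (hx : ∀ y ∈ r₂, y < x) :
    ColumnStrict (r₁ ++ [x]) r₂ ↔ ColumnStrict r₁ r₂ := by
  have hget : ∀ i < r₁.length, (r₁ ++ [x]).getD i 0 = r₁.getD i 0 := fun i hi => by
    simp [List.getD_eq_getElem?_getD, List.getElem?_append_left hi]
  refine ⟨fun ⟨hlen, hcol⟩ => ?_, fun ⟨hlen, hcol⟩ =>
    ⟨by simp; omega, fun i hi => hget i (by omega) ▸ hcol i hi⟩⟩
  have hlen' : r₂.length ≤ r₁.length := by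
    by_contra h
    have := hcol r₁.length (by omega)
    rw [List.getD_eq_getElem _ _ (by simp), List.getD_eq_getElem _ _ (by omega)] at this
    simp only [List.getElem_concat_length] at this
    exact (this.trans (hx _ (List.getElem_mem _))).false
  exact ⟨hlen', fun i hi => hget i (by omega) ▸ hcol i hi⟩

theorem columnStrict_concat_right (hx : ∀ y ∈ r₁, y < x) :
    ColumnStrict r₁ (r₂ ++ [x]) ↔ ColumnStrict r₁ r₂ ∧ r₂.length < r₁.length := by
  have hget : ∀ i < r₂.length, (r₂ ++ [x]).getD i 0 = r₂.getD i 0 := fun i hi => by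
    simp [List.getD_eq_getElem?_getD, List.getElem?_append_left hi]
  refine ⟨fun ⟨hlen, hcol⟩ => ?_, fun ⟨⟨hlen, hcol⟩, hlt⟩ => ⟨by simp; omega, fun i hi => ?_⟩⟩
  · simp only [List.length_append, List.length_singleton] at hlen hcol
    exact ⟨⟨by omega, fun i hi => hget i hi ▸ hcol i (by omega)⟩, by omega⟩
  · simp only [List.length_append, List.length_singleton] at hi
    obtain hi | rfl := Nat.lt_succ_iff_lt_or_eq.mp hi
    · exact hget i hi ▸ hcol i hi
    · rw [List.getD_eq_getElem _ _ hlt, List.getD_eq_getElem _ _ (by simp)]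
      simpa using hx _ (List.getElem_mem _)

end ColumnStrict

theorem columnStrict_idxsOf_iff (v : List Bool) :
    ColumnStrict (v.idxsOf false 1) (v.idxsOf true 1) ↔ PrefixBounded 0 v := by
  induction v using List.reverseRecOn with
  | nil => simp [ColumnStrict, PrefixBounded]
  | append_singleton v c ih =>
    have hlt : ∀ b, ∀ y ∈ v.idxsOf b 1, y < 1 + v.length := fun b y hy => by
      have := List.lt_add_of_mem_idxsOf y hy
      omega
    have hcount := List.count_true_add_count_false v
    have hbal : PrefixBounded 0 v → 2 * v.count true ≤ v.length := fun h => by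
      simpa using h v (List.prefix_refl v)
    rw [List.idxsOf_concat, List.idxsOf_concat, prefixBounded_concat]
    cases c
    · simp only [beq_iff_eq, Bool.false_eq_true, ↓reduceIte, List.append_nil]
      rw [columnStrict_concat_left (hlt true), ih]
      exact ⟨fun h => ⟨h, by simpa using (hbal h).trans (by omega)⟩, And.left⟩
    · simp only [beq_iff_eq, Bool.true_eq_false, ↓reduceIte, List.append_nil]
      rw [columnStrict_concat_right (hlt false), ih, List.length_idxsOf, List.length_idxsOf]
      simp only [List.count_append, List.count_singleton_self]
      exact and_congr_right fun _ => by omega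

theorem perm_idxsOf_false_append_idxsOf_true (v : List Bool) :
    (v.idxsOf false 1 ++ v.idxsOf true 1).Perm (List.range' 1 v.length) := by
  refine (List.perm_ext_iff_of_nodup ?_ List.nodup_range').mpr fun a => ?_
  · exact List.nodup_append.mpr ⟨List.nodup_idxsOf, List.nodup_idxsOf, by grind⟩
  · simp only [List.mem_append, List.mem_idxsOf_iff_getElem_sub_pos, List.mem_range'_1]
    grind

theorem isSYT2_idxsOf_iff {n : ℕ} {v : List Bool} (hv : v.length = n) :
    IsSYT2 n (v.idxsOf false 1) (v.idxsOf true 1) ↔ PrefixBounded 0 v := by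
  rw [← columnStrict_idxsOf_iff, ← hv]
  exact ⟨fun ⟨_, _, hlen, hcol, _⟩ => ⟨hlen, hcol⟩, fun ⟨hlen, hcol⟩ => ⟨List.pairwise_idxsOf,
    List.pairwise_idxsOf, hlen, hcol, perm_idxsOf_false_append_idxsOf_true v⟩⟩

theorem IsSYT2.exists_idxsOf {n : ℕ} {r₁ r₂ : List ℕ} (h : IsSYT2 n r₁ r₂) :
    ∃ v : List Bool, v.length = n ∧ v.idxsOf false 1 = r₁ ∧ v.idxsOf true 1 = r₂ := by
  obtain ⟨h₁, h₂, -, -, hperm⟩ := h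
  have hmem : ∀ a, a ∈ r₁ ∨ a ∈ r₂ ↔ 1 ≤ a ∧ a < 1 + n := fun a => by
    rw [← List.mem_append, hperm.mem_iff, List.mem_range'_1]
  have hdisj : ∀ a ∈ r₁, a ∉ r₂ :=
    List.disjoint_of_nodup_append (hperm.nodup_iff.mpr List.nodup_range')
  refine ⟨(List.range n).map fun i => decide (i + 1 ∈ r₂), by simp,
    List.pairwise_idxsOf.eq_of_mem_iff h₁ fun a => ?_,
    List.pairwise_idxsOf.eq_of_mem_iff h₂ fun a => ?_⟩ <;>
    simp only [List.mem_idxsOf_iff_getElem_sub_pos, List.length_map, List.length_range,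
      List.getElem_map, List.getElem_range] <;>
    grind

theorem eq_of_idxsOf_true_eq {v w : List Bool} (hl : v.length = w.length)
    (h : v.idxsOf true 1 = w.idxsOf true 1) : v = w :=
  List.ext_getElem hl fun i hv hw => by simpa [hv, hw] using congrArg (i + 1 ∈ ·) h

theorem card_isSYT2_eq (n : ℕ) (Q : List ℕ → Prop) :
    Nat.card {p : List ℕ × List ℕ // IsSYT2 n p.1 p.2 ∧ Q p.2} =
      Nat.card {v : List Bool // v.length = n ∧ PrefixBounded 0 v ∧ Q (v.idxsOf true 1)} := by
  refine (Nat.card_eq_of_bijective (fun v => ⟨(v.1.idxsOf false 1, v.1.idxsOf true 1),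
    (isSYT2_idxsOf_iff v.2.1).mpr v.2.2.1, v.2.2.2⟩) ⟨?_, ?_⟩).symm
  · intro ⟨v, hv, _⟩ ⟨w, hw, _⟩ h
    simp only [Subtype.mk.injEq, Prod.mk.injEq] at h
    exact Subtype.ext (eq_of_idxsOf_true_eq (hv.trans hw.symm) h.2)
  · rintro ⟨⟨r₁, r₂⟩, h, hQ⟩
    obtain ⟨v, rfl, rfl, rfl⟩ := h.exists_idxsOf
    exact ⟨⟨v, rfl, (isSYT2_idxsOf_iff rfl).mp h, hQ⟩, rfl⟩

theorem entrySet_finite (r : List ℕ) : (entrySet r).Finite := by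
  simpa [entrySet, Set.image, eq_comm] using r.finite_toSet.image (Nat.cast : ℕ → ℤ)

theorem ncard_inter_entrySet {r : List ℕ} (hr : r.Nodup) (P : ℤ → Prop) [DecidablePred P] :
    ({z : ℤ | P z} ∩ entrySet r).ncard = (r.filter fun x : ℕ => P x).length := by
  have : {z : ℤ | P z} ∩ entrySet r =
      ↑((r.filter fun x : ℕ => P x).map (Nat.cast : ℕ → ℤ)).toFinset := by
    ext z
    simp [entrySet]
    grind
  rw [this, Set.ncard_coe_finset,
    List.toFinset_card_of_nodup ((hr.filter _).map Nat.cast_injective), List.length_map]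

theorem ncard_window_inter_entrySet_idxsOf (v : List Bool) (a k : ℕ) :
    ({z : ℤ | (a : ℤ) < z ∧ z ≤ a + k} ∩ entrySet (v.idxsOf true 1)).ncard =
      ((v.drop a).take k).count true := by
  rw [ncard_inter_entrySet List.nodup_idxsOf, ← List.length_filter_idxsOf v true 1 a k]
  congr 1
  refine List.filter_congr fun j _ => ?_
  simp only [decide_eq_decide]
  omega

theorem uncrowded_entrySet_idxsOf_iff (v : List Bool) :
    Uncrowded (entrySet (v.idxsOf true 1)) ↔ InfixBounded v := by
  have hfin := entrySet_finite (v.idxsOf true 1)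
  constructor
  · rintro hU f ⟨s, t, rfl⟩
    have hcount := ncard_window_inter_entrySet_idxsOf (s ++ f ++ t) s.length f.length
    rw [show ((s ++ f ++ t).drop s.length).take f.length = f by simp] at hcount
    rw [← hcount]
    by_cases hk : f.length ≤ 2
    · have := hcount ▸ List.count_le_length (a := true) (l := f)
      omega
    · have hsub : {z : ℤ | (s.length : ℤ) < z ∧ z ≤ s.length + f.length} ⊆
          {z : ℤ | ((s.length + 1 : ℕ) : ℤ) ≤ z ∧
            z ≤ ((s.length + 1 : ℕ) : ℤ) + 2 * ((f.length / 2 : ℕ) : ℤ)} := by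
        intro z ⟨h₁, h₂⟩
        constructor <;> push_cast <;> omega
      have := (Set.ncard_le_ncard (Set.inter_subset_inter_left _ hsub)
        (hfin.inter_of_right _)).trans (hU _ (f.length / 2) (by omega))
      omega
  · intro hIB y x hx
    let a := (y - 1).toNat
    have hsub : {z : ℤ | y ≤ z ∧ z ≤ y + 2 * x} ∩ entrySet (v.idxsOf true 1) ⊆
        {z : ℤ | (a : ℤ) < z ∧ z ≤ a + ↑(2 * x + 1)} ∩ entrySet (v.idxsOf true 1) := by
      rintro z ⟨⟨hyz, hzy⟩, j, hj, rfl⟩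
      have := List.ge_of_mem_idxsOf j hj
      exact ⟨⟨by omega, by omega⟩, j, hj, rfl⟩
    have hinfix : (v.drop a).take (2 * x + 1) <:+: v :=
      (List.take_prefix _ _).isInfix.trans (List.drop_suffix _ _).isInfix
    have := hIB _ hinfix
    have := (Set.ncard_le_ncard hsub (hfin.inter_of_right _)).trans_eq
      (ncard_window_inter_entrySet_idxsOf v a (2 * x + 1))
    have := List.length_take_le (2 * x + 1) (v.drop a)
    omega

theorem prefixBounded_zero_and_infixBounded_cons_iff (c : Bool) (u : List Bool) :
    PrefixBounded 0 (c :: u) ∧ InfixBounded (c :: u) ↔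
      c = false ∧ PrefixBounded 1 u ∧ InfixBounded u := by
  rw [infixBounded_cons]
  cases c
  · rw [prefixBounded_cons_false, prefixBounded_cons_false]
    exact ⟨fun ⟨h, _, hu⟩ => ⟨rfl, h, hu⟩,
      fun ⟨_, h, hu⟩ => ⟨h, hu.prefixBounded.mono (by norm_num), hu⟩⟩
  · simp [prefixBounded_cons_true]

theorem card_prefixBounded_infixBounded_succ (m : ℕ) :
    Nat.card {v : List Bool // v.length = m + 1 ∧ PrefixBounded 0 v ∧ InfixBounded v} =
      Nat.card {u : List Bool // u.length = m ∧ PrefixBounded 1 u ∧ InfixBounded u} := by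
  refine Nat.card_congr
    { toFun := fun v => ⟨v.1.tail, ?_⟩
      invFun := fun u => ⟨false :: u.1, by
        simpa [prefixBounded_zero_and_infixBounded_cons_iff] using u.2⟩
      left_inv := ?_
      right_inv := fun u => rfl }
  · obtain ⟨_ | ⟨c, u⟩, hl, h⟩ := v
    · simp at hl
    · rw [prefixBounded_zero_and_infixBounded_cons_iff] at h
      exact ⟨by simpa using hl, h.2⟩
  · rintro ⟨_ | ⟨c, u⟩, hl, h⟩
    · simp at hl
    · rw [prefixBounded_zero_and_infixBounded_cons_iff] at h
      obtain ⟨rfl, -⟩ := h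
      rfl

/-- Read from right to left: the state reached on `u` is the largest excess `#1 - #0` of a prefix
of `u`, or `3` once some factor of `u` has excess above `2`. -/
def crowdStep : Bool → Fin 4 → Fin 4
  | true => ![1, 2, 3, 3]
  | false => ![0, 0, 1, 3]

theorem foldr_crowdStep_le_iff (u : List Bool) (e : ℕ) :
    ((u.foldr crowdStep 0 : Fin 4) : ℕ) ≤ min e 2 ↔ PrefixBounded e u ∧ InfixBounded u := by
  induction u generalizing e with
  | nil => simp [PrefixBounded, InfixBounded]
  | cons c u ih =>
    rw [infixBounded_cons, List.foldr_cons]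
    cases c
    · have hu : InfixBounded u → PrefixBounded 3 u := fun h => h.prefixBounded.mono (by norm_num)
      rw [prefixBounded_cons_false, prefixBounded_cons_false,
        and_congr_right fun _ => and_iff_right_of_imp hu, ← ih]
      generalize u.foldr crowdStep 0 = q
      fin_cases q <;> simp [crowdStep]
    · have key : PrefixBounded e (true :: u) ∧ PrefixBounded 2 (true :: u) ∧ InfixBounded u ↔
          1 ≤ e ∧ (PrefixBounded (e - 1) u ∧ InfixBounded u) ∧
            (PrefixBounded 1 u ∧ InfixBounded u) := by
        simp only [prefixBounded_cons_true]
        tauto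
      rw [key, ← ih, ← ih]
      generalize u.foldr crowdStep 0 = q
      fin_cases q <;> simp [crowdStep]
      omega

theorem foldr_crowdStep_le_one_iff (u : List Bool) :
    u.foldr crowdStep 0 ≤ 1 ↔ PrefixBounded 1 u ∧ InfixBounded u := by
  rw [← foldr_crowdStep_le_iff u 1, Fin.le_def]
  rfl

namespace OddBlocks

theorem replicate_iff {k : ℕ} : OddBlocks (List.replicate k true) ↔ k = 0 ∨ Odd k := by
  refine ⟨fun h => or_iff_not_imp_left.mpr fun hk => ?_, ?_⟩
  · simpa using h [] (List.replicate k true) [] (by simp) (by simpa using hk)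
      (fun b hb => (List.mem_replicate.mp hb).2) (by simp) (by simp)
  · rintro hk l₁ l₂ l₃ he hne - h₁ h₃
    have hall : ∀ b ∈ l₁ ++ l₂ ++ l₃, b = true := fun b hb => (List.mem_replicate.mp (he ▸ hb)).2
    obtain rfl : l₁ = [] := by
      rcases List.eq_nil_or_concat l₁ with rfl | ⟨L, b, rfl⟩
      · rfl
      · exact absurd (hall b (by simp)) (by simpa using h₁)
    obtain rfl : l₃ = [] := by
      rcases l₃ with _ | ⟨b, L⟩
      · rfl
      · exact absurd (hall b (by simp)) (by simpa using h₃)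
    have := congrArg List.length he
    simp only [List.length_replicate, List.nil_append, List.append_nil] at this
    subst this
    exact hk.resolve_left (by simpa using hne)

theorem append_cons_false_iff {a b : List Bool} :
    OddBlocks (a ++ false :: b) ↔ OddBlocks a ∧ OddBlocks b := by
  refine ⟨fun h => ⟨fun l₁ l₂ l₃ he hne hall h₁ h₃ => ?_, fun l₁ l₂ l₃ he hne hall h₁ h₃ => ?_⟩,
    fun ⟨ha, hb⟩ l₁ l₂ l₃ he hne hall h₁ h₃ => ?_⟩
  · exact h l₁ l₂ (l₃ ++ false :: b) (by simp [he]) hne hall h₁ (by cases l₃ <;> simp_all)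
  · refine h (a ++ false :: l₁) l₂ l₃ (by simp [he]) hne hall ?_ h₃
    cases h : l₁.getLast? <;> simp_all [List.getLast?_cons]
  · have hl₂ : false ∉ l₂ := fun h => by simpa using hall false h
    rw [List.append_assoc, List.append_eq_append_iff] at he
    rcases he with ⟨c, rfl, he⟩ | ⟨c, rfl, he⟩
    · rcases c with _ | ⟨x, c⟩
      · rcases l₂ with _ | ⟨y, l₂⟩
        · exact absurd rfl hne
        · simp at he
          simp_all
      · simp only [List.cons_append, List.cons.injEq] at he
        obtain ⟨rfl, rfl⟩ := he
        refine hb c l₂ l₃ (by simp) hne hall ?_ h₃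
        cases h : c.getLast? <;> simp_all [List.getLast?_cons]
    · rw [List.append_eq_append_iff] at he
      rcases he with ⟨d, rfl, rfl⟩ | ⟨d, rfl, he⟩
      · exact ha l₁ l₂ d (by simp) hne hall h₁ (by cases d <;> simp_all)
      · rcases d with _ | ⟨x, d⟩
        · simpa using ha l₁ c [] (by simp) (by simpa using hne) (by simpa using hall) h₁ (by simp)
        · simp only [List.cons_append, List.cons.injEq] at he
          simp_all

theorem replicate_add_three_append_iff (k : ℕ) (w : List Bool) :
    OddBlocks (List.replicate (k + 3) true ++ w) ↔
      OddBlocks (List.replicate (k + 1) true ++ w) := by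
  induction w generalizing k with
  | nil => simp [replicate_iff, parity_simps]
  | cons c w ih =>
    cases c
    · simp [append_cons_false_iff, replicate_iff, parity_simps]
    · simpa [List.replicate_succ'] using ih (k + 1)

end OddBlocks

/-- Read from right to left: the state reached on `w` is `0`, `1` or `2` according as the leading
block of `1`s of `w` is empty, of odd length or of positive even length, or `3` once some other
block has even length. -/
def oddBlocksStep : Bool → Fin 4 → Fin 4
  | true => ![1, 2, 1, 3]
  | false => ![0, 0, 3, 3]

theorem oddBlocks_iff_foldr_oddBlocksStep (w : List Bool) :
    OddBlocks w ↔ w.foldr oddBlocksStep 0 ≤ 1 := by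
  suffices ∀ k < 3, OddBlocks (List.replicate k true ++ w) ↔
      (List.replicate k true ++ w).foldr oddBlocksStep 0 ≤ 1 from this 0 (by norm_num)
  induction w with
  | nil =>
    intro k hk
    rw [List.append_nil, OddBlocks.replicate_iff]
    interval_cases k <;> decide
  | cons c w ih =>
    intro k hk
    cases c
    · have hw := ih 0 (by norm_num)
      rw [List.replicate_zero, List.nil_append] at hw
      rw [OddBlocks.append_cons_false_iff, OddBlocks.replicate_iff, hw, List.foldr_append,
        List.foldr_cons]
      generalize w.foldr oddBlocksStep 0 = q
      interval_cases k <;> fin_cases q <;> decide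
    · obtain hk | rfl : k < 2 ∨ k = 2 := by omega
      · simpa [List.replicate_succ'] using ih (k + 1) (by omega)
      · rw [show List.replicate 2 true ++ true :: w = List.replicate (0 + 3) true ++ w from rfl,
          OddBlocks.replicate_add_three_append_iff, ih 1 (by norm_num)]
        simp only [List.foldr_append]
        generalize w.foldr oddBlocksStep 0 = q
        fin_cases q <;> decide

theorem stmt17 (n : ℕ) :
    Nat.card {p : List ℕ × List ℕ // IsSYT2 n p.1 p.2 ∧ Uncrowded (entrySet p.2)} =
      Nat.card {l : List Bool // l.length = n - 1 ∧ OddBlocks l} := by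
  rw [card_isSYT2_eq n fun r => Uncrowded (entrySet r)]
  simp only [uncrowded_entrySet_idxsOf_iff]
  rcases n with _ | m
  · refine Nat.card_congr (Equiv.subtypeEquivRight fun v => ?_)
    constructor <;> rintro ⟨h, -⟩ <;> obtain rfl := List.length_eq_zero_iff.mp h
    · exact ⟨rfl, OddBlocks.replicate_iff.mpr (Or.inl rfl)⟩
    · simp [PrefixBounded, InfixBounded]
  · rw [Nat.add_sub_cancel, card_prefixBounded_infixBounded_succ]
    simp only [← foldr_crowdStep_le_one_iff, oddBlocks_iff_foldr_oddBlocksStep]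
    exact List.card_foldr_eq_of_relabel (π := fun q => if q = 2 then Equiv.boolNot else 1)
      (by decide) (· ≤ 1) m
end
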